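/- arXiv:1501.06027 — 2 statements merged into one kernel-verified Lean document; each statement's English description precedes it below -/
import Mathlib

section
/- The Marcum Q-function Q₁(a, b) = ∫_b^∞ x exp(−(x²+a²)/2) I₀(ax) dx is strictly increasing in a ≥ 0 for each fixed b > 0. -/
/-- The modified Bessel function of the first kind of order zero. -/
noncomputable def besselI0 (x : ℝ) : ℝ :=
  ∑' k : ℕ, (x / 2) ^ (2 * k) / ((Nat.factorial k : ℝ))^2

/-- The Marcum Q-function of order 1. -/
noncomputable def marcumQ (a b : ℝ) : ℝ :=
  ∫ x in Set.Ioi b, x * Real.exp (-(x^2 + a^2) / 2) * besselI0 (a * x)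

/-!
Expanding `I₀` termwise, the integrand of `Q₁(a, b)` becomes `∑ₖ pₖ(a²/2) · x pₖ(x²/2)`, where
`pₖ(u) = e⁻ᵘ uᵏ / k!` are Poisson weights, and `x pₖ(x²/2)` is the `x`-derivative of
`-Fₖ(x²/2)` with `Fₖ` the Poisson distribution function. Hence
`Q₁(a, b) = ∑ₖ pₖ(a²/2) Fₖ(b²/2) = P(N_{b²/2} ≤ N_{a²/2})` for independent Poisson variables.
Since `Po(u + w) = Po(u) ∗ Po(w)`, averaging a monotone sequence against `Po(u)` can only
increase with `u`, and strictly so when the sequence is not constant on `{0, 1}`; for `b > 0`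
the sequence `k ↦ Fₖ(b²/2)` is of this kind.
-/

open MeasureTheory Real Set Filter Topology Finset
open scoped Nat

/-- The mass function of `ProbabilityTheory.poissonMeasure`, with a real rate so that it can be
differentiated in the rate. -/
noncomputable def poissonWeight (u : ℝ) (k : ℕ) : ℝ := exp (-u) * u ^ k / k !

noncomputable def poissonCDF (u : ℝ) (k : ℕ) : ℝ := ∑ j ∈ range (k + 1), poissonWeight u j

section Poisson

variable {u : ℝ}

@[simp]
lemma poissonWeight_zero_right (u : ℝ) : poissonWeight u 0 = exp (-u) := by
  simp [poissonWeight]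

lemma poissonWeight_nonneg (hu : 0 ≤ u) (k : ℕ) : 0 ≤ poissonWeight u k := by
  unfold poissonWeight; positivity

lemma poissonWeight_pos (hu : 0 < u) (k : ℕ) : 0 < poissonWeight u k := by
  unfold poissonWeight; positivity

lemma hasSum_poissonWeight (u : ℝ) : HasSum (poissonWeight u) 1 := by
  have h : poissonWeight u = fun k => exp (-u) * (u ^ k / k !) :=
    funext fun k => mul_div_assoc ..
  simpa only [h, ← exp_eq_exp_ℝ, ← exp_add, neg_add_cancel, exp_zero] using
    (NormedSpace.expSeries_div_hasSum_exp u).mul_left (exp (-u))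

lemma poissonWeight_add (u w : ℝ) (k : ℕ) :
    poissonWeight (u + w) k =
      ∑ ij ∈ antidiagonal k, poissonWeight u ij.1 * poissonWeight w ij.2 := by
  simp only [poissonWeight, (Commute.all u w).add_pow', Finset.sum_div, Finset.mul_sum]
  refine Finset.sum_congr rfl fun ij hij => ?_
  rw [← mem_antidiagonal.mp hij, nsmul_eq_mul, Nat.cast_add_choose, neg_add, exp_add]
  field_simp

lemma summable_norm_poissonWeight_mul (hu : 0 ≤ u) {d : ℕ → ℝ}
    (hd : Bornology.IsBounded (range d)) : Summable fun k => ‖poissonWeight u k * d k‖ := by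
  obtain ⟨C, hC⟩ := isBounded_iff_forall_norm_le.1 hd
  refine Summable.of_nonneg_of_le (fun _ => norm_nonneg _) (fun k => ?_)
    ((hasSum_poissonWeight u).summable.mul_right C)
  rw [norm_mul, norm_of_nonneg (poissonWeight_nonneg hu k)]
  exact mul_le_mul_of_nonneg_left (hC _ (mem_range_self k)) (poissonWeight_nonneg hu k)

lemma strictMonoOn_tsum_poissonWeight_mul {d : ℕ → ℝ} (hd : Monotone d)
    (hbd : Bornology.IsBounded (range d)) (h01 : d 0 < d 1) :
    StrictMonoOn (fun u => ∑' k, poissonWeight u k * d k) (Ici 0) := by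
  intro u (hu : 0 ≤ u) v _ huv
  obtain ⟨w, hw, rfl⟩ : ∃ w, 0 < w ∧ v = u + w := ⟨v - u, by linarith, by ring⟩
  show ∑' k, poissonWeight u k * d k < ∑' k, poissonWeight (u + w) k * d k
  have hw_norm : Summable fun k => ‖poissonWeight w k‖ :=
    (hasSum_poissonWeight w).summable.congr fun k =>
      (norm_of_nonneg (poissonWeight_nonneg hw.le k)).symm
  -- Multiplying by `∑ₖ poissonWeight w k = 1` puts both sides on the same product weights.
  have hleft : ∑' k, poissonWeight u k * d k =
      ∑' k, ∑ ij ∈ antidiagonal k, poissonWeight u ij.1 * d ij.1 * poissonWeight w ij.2 := by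
    rw [← tsum_mul_tsum_eq_tsum_sum_antidiagonal_of_summable_norm
      (summable_norm_poissonWeight_mul hu hbd) hw_norm, (hasSum_poissonWeight w).tsum_eq, mul_one]
  have hright (k : ℕ) : poissonWeight (u + w) k * d k =
      ∑ ij ∈ antidiagonal k, poissonWeight u ij.1 * d (ij.1 + ij.2) * poissonWeight w ij.2 := by
    rw [poissonWeight_add, Finset.sum_mul]
    refine Finset.sum_congr rfl fun ij hij => ?_
    rw [mem_antidiagonal.mp hij]; ring
  have hterm (ij : ℕ × ℕ) : poissonWeight u ij.1 * d ij.1 * poissonWeight w ij.2 ≤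
      poissonWeight u ij.1 * d (ij.1 + ij.2) * poissonWeight w ij.2 := by
    have := poissonWeight_nonneg hu ij.1
    have := poissonWeight_nonneg hw.le ij.2
    gcongr
    exact hd (Nat.le_add_right _ _)
  rw [hleft]
  refine Summable.tsum_lt_tsum (i := 1) (fun k => ?_) ?_
    (summable_norm_sum_mul_antidiagonal_of_summable_norm
      (summable_norm_poissonWeight_mul hu hbd) hw_norm).of_norm
    (summable_norm_poissonWeight_mul (by positivity) hbd).of_norm
  · rw [hright]
    exact Finset.sum_le_sum fun ij _ => hterm ij
  · rw [hright]
    refine Finset.sum_lt_sum (fun ij _ => hterm ij) ⟨(0, 1), by simp, ?_⟩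
    have := poissonWeight_pos hw 1
    simp only [poissonWeight_zero_right, zero_add]
    gcongr

lemma hasDerivAt_poissonWeight_succ (u : ℝ) (k : ℕ) :
    HasDerivAt (fun u => poissonWeight u (k + 1))
      (poissonWeight u k - poissonWeight u (k + 1)) u := by
  have h := ((hasDerivAt_neg u).exp.mul (hasDerivAt_pow (k + 1) u)).div_const ((k + 1)! : ℝ)
  refine h.congr_deriv ?_
  simp only [poissonWeight, Nat.factorial_succ, Nat.cast_mul, Nat.add_sub_cancel]
  field_simp
  ring

lemma hasDerivAt_poissonCDF (u : ℝ) (k : ℕ) :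
    HasDerivAt (fun u => poissonCDF u k) (-poissonWeight u k) u := by
  induction k with
  | zero => simpa [poissonCDF] using (hasDerivAt_neg u).exp
  | succ k ih =>
    simp only [poissonCDF, Finset.sum_range_succ _ (k + 1)] at ih ⊢
    exact (ih.add (hasDerivAt_poissonWeight_succ u k)).congr_deriv (by ring)

lemma tendsto_poissonCDF_atTop (k : ℕ) : Tendsto (fun u => poissonCDF u k) atTop (𝓝 0) := by
  simpa [poissonCDF, poissonWeight, mul_comm] using tendsto_finsetSum (range (k + 1)) fun j _ =>
    (tendsto_pow_mul_exp_neg_atTop_nhds_zero j).div_const (j ! : ℝ)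

lemma poissonCDF_le_one (hu : 0 ≤ u) (k : ℕ) : poissonCDF u k ≤ 1 :=
  sum_le_hasSum _ (fun j _ => poissonWeight_nonneg hu j) (hasSum_poissonWeight u)

lemma isBounded_range_poissonCDF (hu : 0 ≤ u) : Bornology.IsBounded (range (poissonCDF u)) :=
  (Metric.isBounded_Icc (0 : ℝ) 1).subset <| range_subset_iff.2 fun k =>
    ⟨Finset.sum_nonneg fun j _ => poissonWeight_nonneg hu j, poissonCDF_le_one hu k⟩

lemma monotone_poissonCDF (hu : 0 ≤ u) : Monotone (poissonCDF u) := fun _ _ hij =>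
  Finset.sum_le_sum_of_subset_of_nonneg (range_subset_range.2 (by omega))
    fun j _ _ => poissonWeight_nonneg hu j

lemma poissonCDF_zero_lt_one (hu : 0 < u) : poissonCDF u 0 < poissonCDF u 1 := by
  simpa [poissonCDF, Finset.sum_range_succ] using poissonWeight_pos hu 1

end Poisson

section MarcumQ

lemma hasDerivAt_neg_poissonCDF_sq_div_two (k : ℕ) (x : ℝ) :
    HasDerivAt (fun x => -poissonCDF (x ^ 2 / 2) k) (x * poissonWeight (x ^ 2 / 2) k) x := by
  have hsq : HasDerivAt (fun x : ℝ => x ^ 2 / 2) x x := by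
    simpa using (hasDerivAt_pow 2 x).div_const 2
  exact ((hasDerivAt_poissonCDF _ k).comp x hsq).neg.congr_deriv (by ring)

lemma tendsto_neg_poissonCDF_sq_div_two_atTop (k : ℕ) :
    Tendsto (fun x : ℝ => -poissonCDF (x ^ 2 / 2) k) atTop (𝓝 0) := by
  simpa using ((tendsto_poissonCDF_atTop k).comp
    ((tendsto_pow_atTop two_ne_zero).atTop_div_const two_pos)).neg

variable {b : ℝ}

lemma mul_poissonWeight_sq_div_two_nonneg (hb : 0 ≤ b) (k : ℕ) {x : ℝ} (hx : x ∈ Ioi b) :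
    0 ≤ x * poissonWeight (x ^ 2 / 2) k :=
  mul_nonneg (hb.trans hx.out.le) (poissonWeight_nonneg (by positivity) k)

lemma integrableOn_mul_poissonWeight_sq_div_two (hb : 0 ≤ b) (k : ℕ) :
    IntegrableOn (fun x => x * poissonWeight (x ^ 2 / 2) k) (Ioi b) :=
  integrableOn_Ioi_deriv_of_nonneg' (fun x _ => hasDerivAt_neg_poissonCDF_sq_div_two k x)
    (fun _ => mul_poissonWeight_sq_div_two_nonneg hb k) (tendsto_neg_poissonCDF_sq_div_two_atTop k)

lemma integral_mul_poissonWeight_sq_div_two (hb : 0 ≤ b) (k : ℕ) :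
    ∫ x in Ioi b, x * poissonWeight (x ^ 2 / 2) k = poissonCDF (b ^ 2 / 2) k := by
  rw [integral_Ioi_of_hasDerivAt_of_nonneg' (fun x _ => hasDerivAt_neg_poissonCDF_sq_div_two k x)
    (fun _ => mul_poissonWeight_sq_div_two_nonneg hb k) (tendsto_neg_poissonCDF_sq_div_two_atTop k),
    zero_sub, neg_neg]

lemma mul_exp_mul_besselI0_eq_tsum (a x : ℝ) :
    x * exp (-(x ^ 2 + a ^ 2) / 2) * besselI0 (a * x) =
      ∑' k, poissonWeight (a ^ 2 / 2) k * (x * poissonWeight (x ^ 2 / 2) k) := by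
  rw [besselI0, ← tsum_mul_left]
  refine tsum_congr fun k => ?_
  have hexp : exp (-(x ^ 2 + a ^ 2) / 2) = exp (-(a ^ 2 / 2)) * exp (-(x ^ 2 / 2)) := by
    rw [← exp_add]; ring_nf
  have hpow : (a * x / 2) ^ (2 * k) = (a ^ 2 / 2) ^ k * (x ^ 2 / 2) ^ k := by
    rw [pow_mul, ← mul_pow]; ring
  simp only [poissonWeight, hexp, hpow]
  ring

lemma marcumQ_eq_tsum (a : ℝ) (hb : 0 ≤ b) :
    marcumQ a b = ∑' k, poissonWeight (a ^ 2 / 2) k * poissonCDF (b ^ 2 / 2) k := by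
  set F : ℕ → ℝ → ℝ := fun k x => poissonWeight (a ^ 2 / 2) k * (x * poissonWeight (x ^ 2 / 2) k)
  have hF_int (k : ℕ) : IntegrableOn (F k) (Ioi b) :=
    (integrableOn_mul_poissonWeight_sq_div_two hb k).const_mul _
  have hF_integral (k : ℕ) :
      ∫ x in Ioi b, F k x = poissonWeight (a ^ 2 / 2) k * poissonCDF (b ^ 2 / 2) k := by
    rw [integral_const_mul, integral_mul_poissonWeight_sq_div_two hb]
  have hF_norm (k : ℕ) : ∫ x in Ioi b, ‖F k x‖ = ∫ x in Ioi b, F k x :=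
    setIntegral_congr_fun measurableSet_Ioi fun x hx => norm_of_nonneg <|
      mul_nonneg (poissonWeight_nonneg (by positivity) k)
        (mul_poissonWeight_sq_div_two_nonneg hb k hx)
  have hsum : Summable fun k => ∫ x in Ioi b, ‖F k x‖ := by
    simpa only [hF_norm, hF_integral] using (summable_norm_poissonWeight_mul (by positivity)
      (isBounded_range_poissonCDF (u := b ^ 2 / 2) (by positivity))).of_norm
  rw [marcumQ]
  simp only [mul_exp_mul_besselI0_eq_tsum]
  rw [← integral_tsum_of_summable_integral_norm hF_int hsum]
  exact tsum_congr hF_integral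

end MarcumQ

/-- The Marcum Q-function `Q₁(a,b)` is strictly increasing in `a ≥ 0` for fixed `b > 0`. -/
theorem marcumQ_strictMonoOn (b : ℝ) (hb : 0 < b) :
    StrictMonoOn (fun a => marcumQ a b) (Set.Ici (0:ℝ)) := by
  have hl : 0 < b ^ 2 / 2 := by positivity
  have hsq : StrictMonoOn (fun a : ℝ => a ^ 2 / 2) (Ici 0) := fun a ha c _ hac =>
    div_lt_div_of_pos_right (pow_lt_pow_left₀ hac ha two_ne_zero) two_pos
  have hmaps : MapsTo (fun a : ℝ => a ^ 2 / 2) (Ici 0) (Ici 0) := fun a _ =>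
    div_nonneg (sq_nonneg a) zero_le_two
  have := (strictMonoOn_tsum_poissonWeight_mul (monotone_poissonCDF hl.le)
    (isBounded_range_poissonCDF hl.le) (poissonCDF_zero_lt_one hl)).comp hsq hmaps
  simpa only [Function.comp_def, ← marcumQ_eq_tsum _ hb.le] using this
end

section
/- Let R̂ be an N×N Hermitian positive semidefinite matrix with R̂ ≠ 0, let p ∈ ℂᴺ with ‖p‖² = N and p* R̂ p > 0, and for ρ ∈ (0,1) let R̂(ρ) = (1−ρ)R̂ + ρI. Then lim_{ρ→1⁻} ( p* R̂(ρ)⁻¹ p − ρ p* R̂(ρ)⁻² p ) / (1−ρ) = p* R̂ p. -/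
set_option maxHeartbeats 1000000
open Matrix Filter
open scoped ComplexOrder

private lemma aux_smul_psd {N : ℕ} {R : Matrix (Fin N) (Fin N) ℂ} (hR : R.PosSemidef)
    {c : ℝ} (hc : 0 ≤ c) : ((c : ℂ) • R).PosSemidef := by
  refine ⟨?_, fun x => ?_⟩
  · have := hR.1
    unfold Matrix.IsHermitian at this ⊢
    rw [conjTranspose_smul, this]
    simp [Complex.star_def, Complex.conj_ofReal]
  · exact (hR.smul (a := (c : ℂ)) (by exact_mod_cast hc)).2 x

private lemma aux_smul_one_pd {N : ℕ} {c : ℝ} (hc : 0 < c) :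
    ((c : ℂ) • (1 : Matrix (Fin N) (Fin N) ℂ)).PosDef := by
  refine ⟨?_, fun x hx => ?_⟩
  · unfold Matrix.IsHermitian
    rw [conjTranspose_smul, conjTranspose_one]
    simp [Complex.star_def, Complex.conj_ofReal]
  · exact ((Matrix.PosDef.one (n := Fin N) (R := ℂ)).smul (a := (c : ℂ))
      (by exact_mod_cast hc)).2 hx

/-- The limit as `ρ → 1⁻` of `(p* R̂(ρ)⁻¹ p - ρ p* R̂(ρ)⁻² p)/(1-ρ)` equals `p* R̂ p`,
where `R̂(ρ) = (1-ρ)R̂ + ρI`. This is the l'Hôpital computation defining `f̂_SCM(1)`. -/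
theorem limit_at_one
    (N : ℕ) (Rhat : Matrix (Fin N) (Fin N) ℂ) (hRhat : Rhat.PosSemidef)
    (hRhat0 : Rhat ≠ 0)
    (p : Fin N → ℂ) (hnorm : star p ⬝ᵥ p = (N : ℂ))
    (hpRp : 0 < star p ⬝ᵥ Rhat *ᵥ p) :
    Tendsto
      (fun ρ : ℝ =>
        ((star p ⬝ᵥ (((1 - ρ : ℝ) : ℂ) • Rhat + ((ρ : ℝ) : ℂ) • (1 : Matrix (Fin N) (Fin N) ℂ))⁻¹ *ᵥ p).re
          - ρ * (star p ⬝ᵥ ((((1 - ρ : ℝ) : ℂ) • Rhat + ((ρ : ℝ) : ℂ) • 1)⁻¹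
              * (((1 - ρ : ℝ) : ℂ) • Rhat + ((ρ : ℝ) : ℂ) • 1)⁻¹) *ᵥ p).re) / (1 - ρ))
      (nhdsWithin 1 (Set.Iio 1)) (nhds (star p ⬝ᵥ Rhat *ᵥ p).re) := by
  set f : ℝ → Matrix (Fin N) (Fin N) ℂ :=
    fun ρ => ((1 - ρ : ℝ) : ℂ) • Rhat + ((ρ : ℝ) : ℂ) • 1 with hf
  -- continuity of f
  have hcf : Continuous f := by
    apply Continuous.add
    · exact ((Complex.continuous_ofReal.comp (continuous_const.sub continuous_id)).smul
        continuous_const)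
    · exact Complex.continuous_ofReal.smul continuous_const
  have hf1 : f 1 = 1 := by simp [hf]
  -- continuity of inverse at 1
  have hinv : ContinuousAt (fun ρ => (f ρ)⁻¹) 1 := by
    have heq : (fun ρ => (f ρ)⁻¹) = fun ρ => Ring.inverse (f ρ).det • (f ρ).adjugate := by
      funext ρ; exact Matrix.inv_def _
    rw [heq]
    have hdet : Continuous fun ρ => (f ρ).det := hcf.matrix_det
    have hinvdet : ContinuousAt (fun ρ => Ring.inverse (f ρ).det) 1 := by
      simp only [Ring.inverse_eq_inv']
      apply hdet.continuousAt.inv₀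
      rw [hf1]; simp
    exact hinvdet.smul hcf.matrix_adjugate.continuousAt
  -- the limit function
  have hg : ContinuousAt
      (fun ρ => (star p ⬝ᵥ ((f ρ)⁻¹ * Rhat * (f ρ)⁻¹) *ᵥ p).re) 1 := by
    have hcm : Continuous (fun M : Matrix (Fin N) (Fin N) ℂ × Matrix (Fin N) (Fin N) ℂ =>
        star p ⬝ᵥ (M.1 * Rhat * M.2) *ᵥ p) :=
      continuous_const.dotProduct
        (((continuous_fst.matrix_mul continuous_const).matrix_mul continuous_snd).matrix_mulVec
          continuous_const)
    have h2 : ContinuousAt (fun ρ => ((f ρ)⁻¹, (f ρ)⁻¹)) 1 := hinv.prodMk hinv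
    have h3 : ContinuousAt (fun M : Matrix (Fin N) (Fin N) ℂ × Matrix (Fin N) (Fin N) ℂ =>
        star p ⬝ᵥ (M.1 * Rhat * M.2) *ᵥ p) ((f 1)⁻¹, (f 1)⁻¹) := hcm.continuousAt
    have h4 : ContinuousAt ((fun M : Matrix (Fin N) (Fin N) ℂ × Matrix (Fin N) (Fin N) ℂ =>
        star p ⬝ᵥ (M.1 * Rhat * M.2) *ᵥ p) ∘ (fun ρ => ((f ρ)⁻¹, (f ρ)⁻¹))) 1 :=
      ContinuousAt.comp h3 h2
    exact ContinuousAt.comp (g := Complex.re) Complex.continuous_re.continuousAt h4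
  have hval : (star p ⬝ᵥ ((f 1)⁻¹ * Rhat * (f 1)⁻¹) *ᵥ p).re = (star p ⬝ᵥ Rhat *ᵥ p).re := by
    rw [hf1, inv_one, one_mul, mul_one]
  have htend : Tendsto (fun ρ => (star p ⬝ᵥ ((f ρ)⁻¹ * Rhat * (f ρ)⁻¹) *ᵥ p).re)
      (nhdsWithin 1 (Set.Iio 1)) (nhds (star p ⬝ᵥ Rhat *ᵥ p).re) := by
    rw [← hval]
    exact hg.tendsto.mono_left nhdsWithin_le_nhds
  refine htend.congr' ?_ |>.mono_left (le_refl _)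
  -- eventual equality on (0,1)
  have hmem : Set.Ioo (0:ℝ) 1 ∈ nhdsWithin 1 (Set.Iio 1) :=
    Ioo_mem_nhdsLT_of_mem (by constructor <;> norm_num)
  filter_upwards [hmem] with ρ hρ
  obtain ⟨hρ0, hρ1⟩ := hρ
  set A := f ρ with hA
  have hpd : A.PosDef :=
    Matrix.PosDef.posSemidef_add (aux_smul_psd hRhat (by linarith)) (aux_smul_one_pd hρ0)
  have hu : IsUnit A.det := (Matrix.isUnit_iff_isUnit_det A).mp hpd.isUnit
  have h1 : A⁻¹ * A = 1 := Matrix.nonsing_inv_mul A hu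
  have h2 : A * A⁻¹ = 1 := Matrix.mul_nonsing_inv A hu
  -- key identity
  have hkey : ((1-ρ:ℝ):ℂ) • (A⁻¹ * Rhat * A⁻¹) = A⁻¹ - ((ρ:ℝ):ℂ) • (A⁻¹ * A⁻¹) := by
    have hr : ((1-ρ:ℝ):ℂ) • Rhat = A - ((ρ:ℝ):ℂ) • 1 := by
      rw [hA, hf]; ring_nf; abel
    calc ((1-ρ:ℝ):ℂ) • (A⁻¹ * Rhat * A⁻¹)
        = A⁻¹ * (((1-ρ:ℝ):ℂ) • Rhat) * A⁻¹ := by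
          rw [Matrix.mul_smul, Matrix.smul_mul]
      _ = A⁻¹ * (A - ((ρ:ℝ):ℂ) • 1) * A⁻¹ := by rw [hr]
      _ = A⁻¹ - ((ρ:ℝ):ℂ) • (A⁻¹ * A⁻¹) := by
          rw [Matrix.mul_sub, Matrix.sub_mul, Matrix.mul_smul, Matrix.smul_mul, mul_one, h1,
            one_mul]
  -- scalar identity
  have hne : (1 : ℝ) - ρ ≠ 0 := by linarith
  have hq : (star p ⬝ᵥ A⁻¹ *ᵥ p).re - ρ * (star p ⬝ᵥ (A⁻¹ * A⁻¹) *ᵥ p).re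
      = (1 - ρ) * (star p ⬝ᵥ (A⁻¹ * Rhat * A⁻¹) *ᵥ p).re := by
    have := congrArg (fun M => (star p ⬝ᵥ M *ᵥ p).re) hkey.symm
    simpa [sub_mulVec, dotProduct_sub, smul_mulVec, dotProduct_smul,
      Complex.re_ofReal_mul, smul_eq_mul] using this
  show _ = ((star p ⬝ᵥ A⁻¹ *ᵥ p).re - ρ * (star p ⬝ᵥ (A⁻¹ * A⁻¹) *ᵥ p).re) / (1 - ρ)
  rw [hq, mul_div_cancel_left₀ _ hne]
end
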